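/- arXiv:2205.14829 — 3 statements merged into one kernel-verified Lean document; each statement's English description precedes it below -/
import Mathlib

section
/- Let n, d be positive integers, let p ∈ ℝ^n be a probability vector (p_i ≥ 0 for all i and Σ_{i=1}^n p_i = 1), and let a_1, …, a_n and x_1, …, x_n be vectors in ℝ^d. Then (Σ_{i=1}^n p_i ⟨a_i, x_i⟩)² ≤ d · Σ_{i=1}^n Σ_{j=1}^n p_i p_j ⟨a_j, x_i⟩², where ⟨·,·⟩ is the Euclidean inner product on ℝ^d. -/
/-!
With `P` the orthogonal projection onto the range of `M`, we have `PM = M`, so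
`tr M = ∑ᵢ ⟪P bᵢ, M bᵢ⟫` for any orthonormal basis `b`; by Cauchy–Schwarz,
`|tr M|² ≤ (∑ᵢ ‖P bᵢ‖²)(∑ᵢ ‖M bᵢ‖²)`, and `∑ᵢ ‖P bᵢ‖² = tr P = rank M`.
The theorem is the case `M = UV` with `U i k = √pᵢ xᵢₖ` and `V k j = √pⱼ aⱼₖ`, whose
rank is at most `d`.
-/

open Module LinearMap
open scoped InnerProductSpace

section

variable {𝕜 E ι : Type*} [RCLike 𝕜] [NormedAddCommGroup E] [InnerProductSpace 𝕜 E] [Fintype ι]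

theorem Submodule.sum_norm_sq_starProjection [FiniteDimensional 𝕜 E] (K : Submodule 𝕜 E)
    (b : OrthonormalBasis ι 𝕜 E) :
    ∑ i, ‖K.starProjection (b i)‖ ^ 2 = finrank 𝕜 K := by
  set P := K.starProjection
  have hproj : IsProj K (P : E →ₗ[𝕜] E) := by
    simpa only [ContinuousLinearMap.range_toLinearMap, K.range_starProjection] using
      (ContinuousLinearMap.IsIdempotentElem.toLinearMap
        K.isIdempotentElem_starProjection).isProj_range
  calc ∑ i, ‖P (b i)‖ ^ 2 = ∑ i, RCLike.re ⟪b i, P (b i)⟫_𝕜 := by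
        refine Finset.sum_congr rfl fun i _ => ?_
        rw [← Submodule.inner_starProjection_left_eq_right, K.re_inner_starProjection_eq_normSq,
          K.starProjection_apply, Submodule.coe_norm]
    _ = RCLike.re (trace 𝕜 E P) := by rw [trace_eq_sum_inner _ b, map_sum]; rfl
    _ = finrank 𝕜 K := by rw [hproj.trace, RCLike.natCast_re]

theorem LinearMap.norm_trace_sq_le_finrank_range_mul_sum_norm_sq [FiniteDimensional 𝕜 E]
    (f : E →ₗ[𝕜] E) (b : OrthonormalBasis ι 𝕜 E) :
    ‖trace 𝕜 E f‖ ^ 2 ≤ finrank 𝕜 (range f) * ∑ i, ‖f (b i)‖ ^ 2 := by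
  set P := (range f).starProjection
  have htrace : trace 𝕜 E f = ∑ i, ⟪P (b i), f (b i)⟫_𝕜 := by
    rw [trace_eq_sum_inner _ b]
    refine Finset.sum_congr rfl fun i _ => ?_
    rw [Submodule.inner_starProjection_left_eq_right,
      Submodule.starProjection_eq_self_iff.mpr (mem_range_self f _)]
  calc ‖trace 𝕜 E f‖ ^ 2 ≤ (∑ i, ‖P (b i)‖ * ‖f (b i)‖) ^ 2 := by
        rw [htrace]
        gcongr
        exact (norm_sum_le _ _).trans (Finset.sum_le_sum fun i _ => norm_inner_le_norm _ _)
    _ ≤ (∑ i, ‖P (b i)‖ ^ 2) * ∑ i, ‖f (b i)‖ ^ 2 := Finset.sum_mul_sq_le_sq_mul_sq _ _ _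
    _ = finrank 𝕜 (range f) * ∑ i, ‖f (b i)‖ ^ 2 := by
        rw [(range f).sum_norm_sq_starProjection b]

theorem Matrix.norm_trace_sq_le_rank_mul_sum_norm_sq [DecidableEq ι] (M : Matrix ι ι 𝕜) :
    ‖M.trace‖ ^ 2 ≤ M.rank * ∑ i, ∑ j, ‖M i j‖ ^ 2 := by
  let b := EuclideanSpace.basisFun ι 𝕜
  have hcol : ∀ j, ‖toLin b.toBasis b.toBasis M (b j)‖ ^ 2 = ∑ i, ‖M i j‖ ^ 2 := by
    intro j
    rw [← b.sum_sq_norm_inner_right]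
    refine Finset.sum_congr rfl fun i _ => ?_
    rw [← b.repr_apply_apply, ← b.coe_toBasis_repr_apply, ← b.coe_toBasis,
      ← LinearMap.toMatrix_apply, LinearMap.toMatrix_toLin]
  have h := (toLin b.toBasis b.toBasis M).norm_trace_sq_le_finrank_range_mul_sum_norm_sq b
  rw [trace_toLin_eq, ← rank_eq_finrank_range_toLin] at h
  rw [Finset.sum_comm]
  simpa only [hcol] using h

end

theorem sq_sum_inner_le_dim_mul_sum_sq_inner_general {n d : ℕ}
    (p : Fin n → ℝ) (hp0 : ∀ i, 0 ≤ p i)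
    (a x : Fin n → Fin d → ℝ) :
    (∑ i, p i * ∑ k, a i k * x i k) ^ 2 ≤
      (d : ℝ) * ∑ i, ∑ j, p i * p j * (∑ k, a j k * x i k) ^ 2 := by
  let U : Matrix (Fin n) (Fin d) ℝ := .of fun i k => √(p i) * x i k
  let V : Matrix (Fin d) (Fin n) ℝ := .of fun k j => √(p j) * a j k
  have hM : ∀ i j, (U * V) i j = √(p i) * √(p j) * ∑ k, a j k * x i k := by
    intro i j
    simp only [U, V, Matrix.mul_apply, Matrix.of_apply, Finset.mul_sum]
    exact Finset.sum_congr rfl fun k _ => by ring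
  have htrace : (U * V).trace = ∑ i, p i * ∑ k, a i k * x i k := by
    simp only [Matrix.trace, Matrix.diag, hM, Real.mul_self_sqrt (hp0 _)]
  have hentry : ∀ i j, ‖(U * V) i j‖ ^ 2 = p i * p j * (∑ k, a j k * x i k) ^ 2 := by
    intro i j
    rw [Real.norm_eq_abs, sq_abs, hM, mul_pow, mul_pow, Real.sq_sqrt (hp0 i), Real.sq_sqrt (hp0 j)]
  have hrank : ((U * V).rank : ℝ) ≤ d := by
    exact_mod_cast (Matrix.rank_mul_le_left U V).trans U.rank_le_width
  calc (∑ i, p i * ∑ k, a i k * x i k) ^ 2 = ‖(U * V).trace‖ ^ 2 := by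
        rw [htrace, Real.norm_eq_abs, sq_abs]
    _ ≤ (U * V).rank * ∑ i, ∑ j, ‖(U * V) i j‖ ^ 2 :=
        (U * V).norm_trace_sq_le_rank_mul_sum_norm_sq
    _ ≤ d * ∑ i, ∑ j, ‖(U * V) i j‖ ^ 2 := by gcongr
    _ = d * ∑ i, ∑ j, p i * p j * (∑ k, a j k * x i k) ^ 2 := by simp only [hentry]

/-- For a probability vector `p` and vectors `a₁, …, aₙ`, `x₁, …, xₙ` in `ℝᵈ`,
`(∑ᵢ pᵢ ⟨aᵢ, xᵢ⟩)² ≤ d ∑ᵢ ∑ⱼ pᵢ pⱼ ⟨aⱼ, xᵢ⟩²`. -/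
theorem sq_sum_inner_le_dim_mul_sum_sq_inner {n d : ℕ} (hn : 0 < n) (hd : 0 < d)
    (p : Fin n → ℝ) (hp0 : ∀ i, 0 ≤ p i) (hp1 : ∑ i, p i = 1)
    (a x : Fin n → Fin d → ℝ) :
    (∑ i, p i * ∑ k, a i k * x i k) ^ 2 ≤
      (d : ℝ) * ∑ i, ∑ j, p i * p j * (∑ k, a j k * x i k) ^ 2 :=
  sq_sum_inner_le_dim_mul_sum_sq_inner_general p hp0 a x
end

section
/- Let n be a positive integer, B > 0 and φ > 0 real constants, and let Δ, g ∈ ℝ^n satisfy 0 ≤ Δ_i ≤ B and g_i ≥ 0 for all i. Let μ and π° be probability vectors in ℝ^n such that ⟨g, μ⟩ ≥ φ · ⟨Δ, π°⟩². Then there exists p ∈ [0, 1] such that the mixture policy π = p·μ + (1 − p)·π° (which is again a probability vector) satisfies ⟨Δ, π⟩³ ≤ (27 B / (4 φ)) · ⟨g, π⟩. In particular, the minimal information ratio min_π ⟨Δ, π⟩³ / ⟨g, π⟩ over probability vectors π is at most (27/4) · B / φ. -/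
open scoped BigOperators

/-- Generic bound on the information ratio `Ψ_{*,3}`: if the instant regrets `Δ` are
bounded by `B`, the information gains `g` are nonnegative, and an exploratory policy `μ`
satisfies `⟨g, μ⟩ ≥ φ ⟨Δ, π°⟩²`, then some mixture `π = p μ + (1 - p) π°` satisfies
`⟨Δ, π⟩³ ≤ (27 B / (4 φ)) ⟨g, π⟩`. -/
theorem exists_mixture_cube_regret_le {n : ℕ} (hn : 0 < n) (B φ : ℝ)
    (hB : 0 < B) (hφ : 0 < φ)
    (Δ g : Fin n → ℝ)
    (hΔ0 : ∀ i, 0 ≤ Δ i) (hΔB : ∀ i, Δ i ≤ B) (hg : ∀ i, 0 ≤ g i)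
    (μ π₀ : Fin n → ℝ)
    (hμ0 : ∀ i, 0 ≤ μ i) (hμ1 : ∑ i, μ i = 1)
    (hπ0 : ∀ i, 0 ≤ π₀ i) (hπ1 : ∑ i, π₀ i = 1)
    (hinfo : φ * (∑ i, Δ i * π₀ i) ^ 2 ≤ ∑ i, g i * μ i) :
    ∃ p : ℝ, 0 ≤ p ∧ p ≤ 1 ∧
      (∑ i, Δ i * (p * μ i + (1 - p) * π₀ i)) ^ 3 ≤
        27 * B / (4 * φ) * ∑ i, g i * (p * μ i + (1 - p) * π₀ i) := by
  set x : ℝ := ∑ i, Δ i * π₀ i with hx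
  set A : ℝ := ∑ i, Δ i * μ i with hA
  set Gμ : ℝ := ∑ i, g i * μ i with hGμ
  set Gπ : ℝ := ∑ i, g i * π₀ i with hGπ
  have hx0 : 0 ≤ x := Finset.sum_nonneg fun i _ => mul_nonneg (hΔ0 i) (hπ0 i)
  have hxB : x ≤ B := by
    calc x ≤ ∑ i, B * π₀ i :=
          Finset.sum_le_sum fun i _ => mul_le_mul_of_nonneg_right (hΔB i) (hπ0 i)
      _ = B := by rw [← Finset.mul_sum, hπ1, mul_one]
  have hA0 : 0 ≤ A := Finset.sum_nonneg fun i _ => mul_nonneg (hΔ0 i) (hμ0 i)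
  have hAB : A ≤ B := by
    calc A ≤ ∑ i, B * μ i :=
          Finset.sum_le_sum fun i _ => mul_le_mul_of_nonneg_right (hΔB i) (hμ0 i)
      _ = B := by rw [← Finset.mul_sum, hμ1, mul_one]
  have hGπ0 : 0 ≤ Gπ := Finset.sum_nonneg fun i _ => mul_nonneg (hg i) (hπ0 i)
  refine ⟨x / (2 * B), by positivity, ?_, ?_⟩
  · rw [div_le_one (by positivity)]; linarith
  set p : ℝ := x / (2 * B) with hp
  have hp0 : 0 ≤ p := by positivity
  have hp1 : p ≤ 1 := by rw [hp, div_le_one (by positivity)]; linarith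
  have hsum1 : (∑ i, Δ i * (p * μ i + (1 - p) * π₀ i)) = p * A + (1 - p) * x := by
    rw [hA, hx, Finset.mul_sum, Finset.mul_sum, ← Finset.sum_add_distrib]
    exact Finset.sum_congr rfl fun i _ => by ring
  have hsum2 : (∑ i, g i * (p * μ i + (1 - p) * π₀ i)) = p * Gμ + (1 - p) * Gπ := by
    rw [hGμ, hGπ, Finset.mul_sum, Finset.mul_sum, ← Finset.sum_add_distrib]
    exact Finset.sum_congr rfl fun i _ => by ring
  rw [hsum1, hsum2]
  have hmix0 : 0 ≤ p * A + (1 - p) * x := by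
    have := mul_nonneg hp0 hA0
    have := mul_nonneg (by linarith : (0:ℝ) ≤ 1 - p) hx0
    linarith
  have hmix : p * A + (1 - p) * x ≤ 3 / 2 * x := by
    have h1 : p * A ≤ p * B := mul_le_mul_of_nonneg_left hAB hp0
    have h2 : p * B = x / 2 := by rw [hp]; field_simp
    nlinarith [mul_nonneg hp0 hx0]
  have hL : (p * A + (1 - p) * x) ^ 3 ≤ 27 / 8 * x ^ 3 := by
    calc (p * A + (1 - p) * x) ^ 3 ≤ (3 / 2 * x) ^ 3 :=
          pow_le_pow_left₀ hmix0 hmix 3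
      _ = 27 / 8 * x ^ 3 := by ring
  have hR : 27 / 8 * x ^ 3 ≤ 27 * B / (4 * φ) * (p * Gμ + (1 - p) * Gπ) := by
    have h1 : φ * x ^ 2 ≤ Gμ := hinfo
    have h2 : p * (φ * x ^ 2) ≤ p * Gμ := mul_le_mul_of_nonneg_left h1 hp0
    have h3 : (0:ℝ) ≤ (1 - p) * Gπ := mul_nonneg (by linarith) hGπ0
    have h4 : 27 * B / (4 * φ) * (p * (φ * x ^ 2)) = 27 / 8 * x ^ 3 := by
      rw [hp]; field_simp; ring
    have h5 : 27 * B / (4 * φ) * (p * (φ * x ^ 2)) ≤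
        27 * B / (4 * φ) * (p * Gμ + (1 - p) * Gπ) := by
      apply mul_le_mul_of_nonneg_left _ (by positivity)
      linarith
    linarith
  linarith
end

section
/- Let n be a positive integer, w ∈ ℝ^n a probability vector (w_i ≥ 0, Σ_i w_i = 1), and let P_1, …, P_n be probability measures on ℝ each supported on [0, 1]. Let Q = Σ_{i=1}^n w_i P_i be the mixture measure, and let m_i = ∫ x dP_i(x) and m̄ = ∫ x dQ(x) = Σ_i w_i m_i. Then Σ_{i=1}^n w_i (m_i − m̄)² ≤ (1/2) Σ_{i=1}^n w_i KL(P_i ‖ Q), where KL denotes the Kullback–Leibler divergence and the right-hand side is interpreted in [0, ∞]. -/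
open MeasureTheory
open scoped ENNReal Classical BigOperators

/-- The Kullback–Leibler divergence `KL(P ‖ Q) ∈ [0, ∞]`: it equals `∫ log (dP/dQ) dP` when
`P ≪ Q` (and this integral makes sense), and `∞` otherwise. -/
noncomputable def klDiv {Ω : Type*} [MeasurableSpace Ω] (P Q : Measure Ω) : ℝ≥0∞ :=
  if P ≪ Q ∧ Integrable (llr P Q) P then ENNReal.ofReal (∫ ω, llr P Q ω ∂P) else ⊤

/-!
Tilting `Q` by `exp (t x)` and applying Gibbs' inequality gives the Donsker–Varadhan bound
`t (m_P - m_Q) - log E_Q[exp (t (Y - m_Q))] ≤ KL(P ‖ Q)`. For `Q` supported on `[0, 1]`, Hoeffding's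
lemma bounds the log-moment generating function by `t² / 8`, and `t = 4 (m_P - m_Q)` yields
`(m_P - m_Q)² ≤ KL(P ‖ Q) / 2`. Averaging over the components of the mixture gives the theorem.
-/

open Real Set ProbabilityTheory

section DonskerVaradhan

variable {Ω : Type*} [MeasurableSpace Ω] {μ ν : Measure Ω}

theorem integral_sub_log_integral_exp_le_integral_llr [IsProbabilityMeasure μ]
    [IsFiniteMeasure ν] [NeZero ν] {f : Ω → ℝ} (hμν : μ ≪ ν) (h_int : Integrable (llr μ ν) μ)
    (hfμ : Integrable f μ) (hfν : Integrable (fun x ↦ exp (f x)) ν) :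
    ∫ x, f x ∂μ - log (∫ x, exp (f x) ∂ν) ≤ ∫ x, llr μ ν x ∂μ := by
  have := isProbabilityMeasure_tilted hfν
  have h_gibbs := InformationTheory.integral_llr_add_sub_measure_univ_nonneg
    (hμν.trans (absolutelyContinuous_tilted hfν)) (integrable_llr_tilted_right hμν hfμ h_int hfν)
  rw [integral_llr_tilted_right hμν hfμ hfν h_int] at h_gibbs
  simp only [probReal_univ, add_sub_cancel_right] at h_gibbs
  linarith

theorem mul_integral_sub_le_integral_llr_of_mem_Icc [IsProbabilityMeasure μ]
    [IsProbabilityMeasure ν] {X : Ω → ℝ} {a b : ℝ} (hX : AEMeasurable X ν)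
    (hXab : ∀ᵐ ω ∂ν, X ω ∈ Icc a b) (hμν : μ ≪ ν) (h_int : Integrable (llr μ ν) μ) (t : ℝ) :
    t * (∫ ω, X ω ∂μ - ∫ ω, X ω ∂ν) - ((b - a) / 2) ^ 2 * t ^ 2 / 2 ≤ ∫ ω, llr μ ν ω ∂μ := by
  have h_hoeffding := hasSubgaussianMGF_of_mem_Icc hX hXab
  have hXμ : Integrable X μ :=
    Integrable.of_mem_Icc a b (hX.mono_ac hμν) (hμν.ae_le hXab)
  have h_dv := integral_sub_log_integral_exp_le_integral_llr (f := fun ω ↦ t * (X ω - ν[X]))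
    hμν h_int ((hXμ.sub (integrable_const _)).const_mul t)
    (h_hoeffding.integrable_exp_mul t)
  rw [integral_const_mul, integral_sub hXμ (integrable_const _), integral_const,
    probReal_univ, one_smul] at h_dv
  have hc : (((‖b - a‖₊ / 2) ^ 2 : NNReal) : ℝ) = ((b - a) / 2) ^ 2 := by
    simp [div_pow, sq_abs]
  calc t * (∫ ω, X ω ∂μ - ∫ ω, X ω ∂ν) - ((b - a) / 2) ^ 2 * t ^ 2 / 2
      ≤ t * (∫ ω, X ω ∂μ - ν[X]) - cgf (fun ω ↦ X ω - ν[X]) ν t := by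
        gcongr
        exact hc ▸ h_hoeffding.cgf_le t
    _ ≤ ∫ ω, llr μ ν ω ∂μ := h_dv

end DonskerVaradhan

theorem ofReal_sq_integral_id_sub_le_half_klDiv {μ ν : Measure ℝ} [IsProbabilityMeasure μ]
    [IsProbabilityMeasure ν] (hμν : μ ≪ ν) (hν : ∀ᵐ x ∂ν, x ∈ Icc (0 : ℝ) 1) :
    ENNReal.ofReal ((∫ x, x ∂μ - ∫ x, x ∂ν) ^ 2) ≤ 2⁻¹ * klDiv μ ν := by
  by_cases h_int : Integrable (llr μ ν) μ
  swap
  · simp [klDiv, h_int]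
  set d := ∫ x, x ∂μ - ∫ x, x ∂ν
  have h := mul_integral_sub_le_integral_llr_of_mem_Icc (X := fun x ↦ x) aemeasurable_id hν hμν
    h_int (4 * d)
  rw [klDiv, if_pos ⟨hμν, h_int⟩, ← ENNReal.ofReal_ofNat 2, ← ENNReal.ofReal_inv_of_pos two_pos,
    ← ENNReal.ofReal_mul (by norm_num)]
  exact ENNReal.ofReal_le_ofReal (by linarith)

section Mixture

variable {ι Ω : Type*} [Fintype ι] [MeasurableSpace Ω] {c : ι → ℝ≥0∞} {P : ι → Measure Ω}

theorem isProbabilityMeasure_sum_smul [∀ i, IsProbabilityMeasure (P i)] (hc : ∑ i, c i = 1) :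
    IsProbabilityMeasure (∑ i, c i • P i) :=
  ⟨by simp [Measure.coe_finsetSum, hc]⟩

theorem ae_sum_smul {p : Ω → Prop} (hp : ∀ i, ∀ᵐ x ∂P i, p x) : ∀ᵐ x ∂(∑ i, c i • P i), p x := by
  rw [ae_iff]
  simp [Measure.coe_finsetSum, ae_iff.1 (hp _)]

theorem absolutelyContinuous_sum_smul {i : ι} (hc : c i ≠ 0) : P i ≪ ∑ j, c j • P j := by
  refine Measure.AbsolutelyContinuous.mk fun s _ hs ↦ ?_
  simp only [Measure.coe_finsetSum, Finset.sum_apply, Measure.smul_apply, smul_eq_mul,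
    Finset.sum_eq_zero_iff, Finset.mem_univ, true_implies, mul_eq_zero] at hs
  exact (hs i).resolve_left hc

end Mixture

theorem sum_sq_mean_dev_le_half_sum_klDiv_general {n : ℕ}
    (w : Fin n → ℝ) (hw0 : ∀ i, 0 ≤ w i) (hw1 : ∑ i, w i = 1)
    (P : Fin n → Measure ℝ) [∀ i, IsProbabilityMeasure (P i)]
    (hsupp : ∀ i, P i (Set.Icc (0 : ℝ) 1) = 1)
    (Q : Measure ℝ) (hQ : Q = ∑ i, ENNReal.ofReal (w i) • P i) :
    ENNReal.ofReal (∑ i, w i * ((∫ x, x ∂(P i)) - ∫ x, x ∂Q) ^ 2) ≤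
      2⁻¹ * ∑ i, ENNReal.ofReal (w i) * klDiv (P i) Q := by
  have hw : ∑ i, ENNReal.ofReal (w i) = 1 := by
    rw [← ENNReal.ofReal_sum_of_nonneg fun i _ ↦ hw0 i, hw1, ENNReal.ofReal_one]
  have : IsProbabilityMeasure Q := hQ ▸ isProbabilityMeasure_sum_smul hw
  have hQ01 : ∀ᵐ x ∂Q, x ∈ Icc (0 : ℝ) 1 :=
    hQ ▸ ae_sum_smul fun i ↦ (mem_ae_iff_prob_eq_one measurableSet_Icc).2 (hsupp i)
  rw [ENNReal.ofReal_sum_of_nonneg fun i _ ↦ mul_nonneg (hw0 i) (sq_nonneg _), Finset.mul_sum]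
  gcongr with i
  rw [ENNReal.ofReal_mul (hw0 i), mul_left_comm]
  rcases (hw0 i).eq_or_lt with hwi | hwi
  · simp [← hwi]
  · gcongr
    exact ofReal_sq_integral_id_sub_le_half_klDiv
      (hQ ▸ absolutelyContinuous_sum_smul (by simpa using hwi)) hQ01

/-- For a mixture `Q = ∑ i, wᵢ Pᵢ` of probability measures on `ℝ` supported on `[0,1]`,
with means `mᵢ = ∫ x dPᵢ` and `m̄ = ∫ x dQ`, the variance of the conditional mean is at most
half the mean KL divergence: `∑ i, wᵢ (mᵢ − m̄)² ≤ (1/2) ∑ i, wᵢ KL(Pᵢ ‖ Q)`. -/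
theorem sum_sq_mean_dev_le_half_sum_klDiv {n : ℕ} (hn : 0 < n)
    (w : Fin n → ℝ) (hw0 : ∀ i, 0 ≤ w i) (hw1 : ∑ i, w i = 1)
    (P : Fin n → Measure ℝ) [∀ i, IsProbabilityMeasure (P i)]
    (hsupp : ∀ i, P i (Set.Icc (0 : ℝ) 1) = 1)
    (Q : Measure ℝ) (hQ : Q = ∑ i, ENNReal.ofReal (w i) • P i) :
    ENNReal.ofReal (∑ i, w i * ((∫ x, x ∂(P i)) - ∫ x, x ∂Q) ^ 2) ≤
      2⁻¹ * ∑ i, ENNReal.ofReal (w i) * klDiv (P i) Q :=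
  sum_sq_mean_dev_le_half_sum_klDiv_general w hw0 hw1 P hsupp Q hQ
end
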